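/- Let t be a real number such that ζ(1/2 + it) = 0. Then lim_{k→∞} (1/k) · Σ_{m=1}^{k} Σ_{n=1}^{k} (mn)^{-1/2} cos(t·(log m - log n)) = 1/(1/4 + t²). -/

import Mathlib

open Complex Real Finset Filter Topology

open intervalIntegral

noncomputable def zterm (n : ℕ) (s : ℂ) : ℂ :=
  (n : ℂ) ^ (-s) - (((n : ℂ) + 1) ^ (1 - s) - (n : ℂ) ^ (1 - s)) / (1 - s)

lemma zterm_bound {n : ℕ} (hn : 1 ≤ n) {s : ℂ} (hs1 : s ≠ 1) (hs0 : 0 < s.re) :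
    ‖zterm n s‖ ≤ ‖s‖ * (n : ℝ) ^ (-s.re - 1) := by
  have hn0 : (0:ℝ) < n := by exact_mod_cast hn
  have hn1 : (1:ℝ) ≤ n := by exact_mod_cast hn
  have hsne : s ≠ 0 := fun h => by simp [h] at hs0
  have hmem : (0:ℝ) ∉ Set.uIcc (n:ℝ) ((n:ℝ)+1) := by
    rw [Set.uIcc_of_le (by linarith)]
    rintro ⟨h1, -⟩; linarith
  have hns1 : -s ≠ -1 := neg_injective.ne hs1
  have hint : (∫ x : ℝ in (n:ℝ)..((n:ℝ)+1), (x:ℂ) ^ (-s))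
      = (((n:ℂ)+1) ^ (1 - s) - (n:ℂ) ^ (1 - s)) / (1 - s) := by
    rw [integral_cpow (Or.inr ⟨hns1, hmem⟩)]
    push_cast; ring_nf
  have hii : IntervalIntegrable (fun x : ℝ => (x:ℂ) ^ (-s)) MeasureTheory.volume (n:ℝ) ((n:ℝ)+1) :=
    intervalIntegrable_cpow (Or.inr hmem)
  have hrepr : zterm n s = ∫ x : ℝ in (n:ℝ)..((n:ℝ)+1), ((n:ℂ) ^ (-s) - (x:ℂ) ^ (-s)) := by
    rw [intervalIntegral.integral_sub intervalIntegrable_const hii, hint,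
      intervalIntegral.integral_const]
    simp [zterm]
  -- pointwise bound
  have key : ∀ x : ℝ, x ∈ Set.uIoc (n:ℝ) ((n:ℝ)+1) →
      ‖(n:ℂ) ^ (-s) - (x:ℂ) ^ (-s)‖ ≤ ‖s‖ * (n : ℝ) ^ (-s.re - 1) := by
    intro x hx
    rw [Set.uIoc_of_le (by linarith)] at hx
    obtain ⟨hx1, hx2⟩ := hx
    have hx0 : (0:ℝ) < x := lt_trans hn0 hx1
    have hmem' : (0:ℝ) ∉ Set.uIcc (n:ℝ) x := by
      rw [Set.uIcc_of_le hx1.le]; rintro ⟨h1, -⟩; linarith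
    have hns0 : -s - 1 ≠ -1 := by
      intro hh; apply hsne; linear_combination -hh - (1:ℂ) + 1
    have hint2 : (∫ y : ℝ in (n:ℝ)..x, (y:ℂ) ^ (-s - 1))
        = ((x:ℂ) ^ (-s) - (n:ℂ) ^ (-s)) / (-s) := by
      rw [integral_cpow (Or.inr ⟨hns0, hmem'⟩)]
      push_cast; ring_nf
    have hdiff : (n:ℂ) ^ (-s) - (x:ℂ) ^ (-s) = s * ∫ y : ℝ in (n:ℝ)..x, (y:ℂ) ^ (-s - 1) := by
      rw [hint2, div_neg, mul_neg, mul_div_assoc', mul_div_cancel_left₀ _ hsne]; ring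
    rw [hdiff, norm_mul]
    have hbnd : ‖∫ y : ℝ in (n:ℝ)..x, (y:ℂ) ^ (-s - 1)‖ ≤ (n:ℝ) ^ (-s.re - 1) * |x - (n:ℝ)| := by
      apply intervalIntegral.norm_integral_le_of_norm_le_const
      intro y hy
      rw [Set.uIoc_of_le hx1.le] at hy
      have hy0 : (0:ℝ) < y := lt_trans hn0 hy.1
      rw [Complex.norm_cpow_eq_rpow_re_of_pos hy0]
      have : (-s - 1).re = -s.re - 1 := by simp
      rw [this]
      exact Real.rpow_le_rpow_of_nonpos hn0 hy.1.le (by linarith)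
    have habs : |x - (n:ℝ)| ≤ 1 := by rw [_root_.abs_of_nonneg (by linarith)]; linarith
    calc ‖s‖ * ‖∫ y : ℝ in (n:ℝ)..x, (y:ℂ) ^ (-s - 1)‖
        ≤ ‖s‖ * ((n:ℝ) ^ (-s.re - 1) * |x - (n:ℝ)|) := by
          exact mul_le_mul_of_nonneg_left hbnd (norm_nonneg s)
      _ ≤ ‖s‖ * ((n:ℝ) ^ (-s.re - 1) * 1) := by
          have hc : (0:ℝ) ≤ (n:ℝ) ^ (-s.re - 1) := Real.rpow_nonneg hn0.le _
          have := mul_le_mul_of_nonneg_left habs hc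
          exact mul_le_mul_of_nonneg_left this (norm_nonneg s)
      _ = ‖s‖ * (n:ℝ) ^ (-s.re - 1) := by ring
  calc ‖zterm n s‖ = ‖∫ x : ℝ in (n:ℝ)..((n:ℝ)+1), ((n:ℂ) ^ (-s) - (x:ℂ) ^ (-s))‖ := by rw [hrepr]
    _ ≤ (‖s‖ * (n:ℝ) ^ (-s.re - 1)) * |((n:ℝ)+1) - (n:ℝ)| :=
        intervalIntegral.norm_integral_le_of_norm_le_const key
    _ = ‖s‖ * (n:ℝ) ^ (-s.re - 1) := by simp

noncomputable def phiz (s : ℂ) : ℂ := ∑' n : ℕ, zterm (n + 1) s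

lemma partial_sum_eq (k : ℕ) {s : ℂ} (hs : s ≠ 1) :
    ∑ n ∈ Finset.Icc 1 k, (n : ℂ) ^ (-s)
      = (∑ n ∈ Finset.range k, zterm (n + 1) s) + (((k : ℂ) + 1) ^ (1 - s) - 1) / (1 - s) := by
  have hs' : (1:ℂ) - s ≠ 0 := fun hh => hs (by linear_combination -hh)
  have h1 : ∑ n ∈ Finset.range k, zterm (n + 1) s
      = (∑ n ∈ Finset.range k, ((n:ℂ) + 1) ^ (-s))
        - ((((k:ℂ) + 1) ^ (1 - s)) / (1 - s) - ((0:ℂ) + 1) ^ (1 - s) / (1 - s)) := by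
    have htel := Finset.sum_range_sub (fun n => (((n:ℕ):ℂ) + 1) ^ (1 - s) / (1 - s)) k
    push_cast at htel
    rw [← htel, ← Finset.sum_sub_distrib]
    apply Finset.sum_congr rfl
    intro n _
    simp only [zterm]
    push_cast
    rw [sub_div]
  have h2 : ∑ n ∈ Finset.Icc 1 k, (n : ℂ) ^ (-s) = ∑ n ∈ Finset.range k, ((n:ℂ) + 1) ^ (-s) := by
    rw [← Finset.Ico_add_one_right_eq_Icc, Finset.sum_Ico_eq_sum_range]
    apply Finset.sum_congr (by norm_num)
    intro n _
    push_cast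
    ring_nf
  rw [h2, h1, zero_add, one_cpow]
  field_simp
  ring

lemma summable_aux {a : ℝ} (ha : 0 < a) : Summable (fun n : ℕ => ((n:ℝ) + 1) ^ (-a - 1)) := by
  have h : Summable (fun n : ℕ => (n:ℝ) ^ (-a - 1)) :=
    Real.summable_nat_rpow.mpr (by linarith)
  have := (summable_nat_add_iff 1).mpr h
  refine this.congr fun n => ?_
  push_cast
  ring_nf

lemma summable_zterm {s : ℂ} (h4 : 0 < s.re) (hs : s ≠ 1) :
    Summable (fun n : ℕ => zterm (n + 1) s) := by
  refine Summable.of_norm_bounded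
    ((summable_aux h4).mul_left ‖s‖) (fun n => ?_)
  have := zterm_bound (n := n + 1) (by omega) hs h4
  simpa using this

lemma tendsto_partial_zterm {s : ℂ} (h4 : 0 < s.re) (hs : s ≠ 1) :
    Tendsto (fun k : ℕ => ∑ n ∈ Finset.range k, zterm (n + 1) s) atTop (𝓝 (phiz s)) :=
  (summable_zterm h4 hs).hasSum.tendsto_sum_nat

lemma tendsto_kpow_zero {s : ℂ} (hs : 1 < s.re) :
    Tendsto (fun k : ℕ => ((k:ℂ) + 1) ^ (1 - s)) atTop (𝓝 0) := by
  rw [tendsto_zero_iff_norm_tendsto_zero]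
  have h1 : ∀ k : ℕ, ‖((k:ℂ) + 1) ^ (1 - s)‖ = ((k:ℝ) + 1) ^ (1 - s.re) := by
    intro k
    have : ((k:ℂ) + 1) = (((k:ℝ) + 1 : ℝ) : ℂ) := by push_cast; ring
    rw [this, Complex.norm_cpow_eq_rpow_re_of_pos (by positivity)]
    simp
  simp_rw [h1]
  have h2 : Tendsto (fun k : ℕ => ((k:ℝ) + 1)) atTop atTop :=
    tendsto_atTop_add_const_right _ _ tendsto_natCast_atTop_atTop
  have h3 : Tendsto (fun x : ℝ => x ^ (-(s.re - 1))) atTop (𝓝 0) :=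
    tendsto_rpow_neg_atTop (by linarith)
  have := h3.comp h2
  refine this.congr fun k => ?_
  simp [neg_sub]

lemma sum_Icc_eq_sum_range_cpow (k : ℕ) (s : ℂ) :
    ∑ n ∈ Finset.Icc 1 k, (n : ℂ) ^ (-s) = ∑ n ∈ Finset.range k, ((n:ℂ) + 1) ^ (-s) := by
  rw [← Finset.Ico_add_one_right_eq_Icc, Finset.sum_Ico_eq_sum_range]
  apply Finset.sum_congr (by norm_num)
  intro n _
  push_cast
  ring_nf

lemma phiz_eq {s : ℂ} (hs : 1 < s.re) : phiz s + 1 / (s - 1) = riemannZeta s := by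
  have hs1 : s ≠ 1 := fun h => by simp [h] at hs
  have h4 : 0 < s.re := by linarith
  have hs' : (1:ℂ) - s ≠ 0 := fun hh => hs1 (by linear_combination -hh)
  have hsum0 : Summable (fun n : ℕ => 1 / ((n:ℕ):ℂ) ^ s) := summable_one_div_nat_cpow.mpr hs
  have hsum : Summable (fun n : ℕ => 1 / ((n:ℂ) + 1) ^ s) := by
    have := (summable_nat_add_iff 1).mpr hsum0
    refine this.congr fun n => ?_
    push_cast
    ring_nf
  have hzeta : Tendsto (fun k : ℕ => ∑ n ∈ Finset.Icc 1 k, (n : ℂ) ^ (-s)) atTop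
      (𝓝 (riemannZeta s)) := by
    rw [zeta_eq_tsum_one_div_nat_add_one_cpow hs]
    have := hsum.hasSum.tendsto_sum_nat
    refine this.congr fun k => ?_
    rw [sum_Icc_eq_sum_range_cpow]
    apply Finset.sum_congr rfl
    intro n _
    rw [cpow_neg, one_div]
  -- the partial zterm sums
  have hA : Tendsto (fun k : ℕ => ∑ n ∈ Finset.range k, zterm (n + 1) s) atTop
      (𝓝 (riemannZeta s + 1 / (1 - s))) := by
    have hconv : Tendsto (fun k : ℕ =>
        (∑ n ∈ Finset.Icc 1 k, (n : ℂ) ^ (-s)) - (((k:ℂ) + 1) ^ (1 - s) - 1) / (1 - s)) atTop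
        (𝓝 (riemannZeta s - ((0:ℂ) - 1) / (1 - s))) := by
      exact hzeta.sub (((tendsto_kpow_zero hs).sub_const 1).div_const _)
    have heq : ∀ k : ℕ, (∑ n ∈ Finset.Icc 1 k, (n : ℂ) ^ (-s))
        - (((k:ℂ) + 1) ^ (1 - s) - 1) / (1 - s) = ∑ n ∈ Finset.range k, zterm (n + 1) s := by
      intro k
      rw [partial_sum_eq k hs1]
      ring
    have h2 : riemannZeta s - ((0:ℂ) - 1) / (1 - s) = riemannZeta s + 1 / (1 - s) := by ring
    rw [← h2]
    exact hconv.congr heq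
  have := tendsto_nhds_unique (tendsto_partial_zterm h4 hs1) hA
  rw [this]
  have : (1:ℂ) / (1 - s) + 1 / (s - 1) = 0 := by
    rw [div_add_div _ _ hs' (sub_ne_zero.mpr hs1)]
    simp [div_eq_zero_iff]
  linear_combination this

lemma isOpen_V : IsOpen {s : ℂ | 1/4 < s.re ∧ s ≠ 1} := by
  apply IsOpen.inter
  · exact isOpen_lt continuous_const Complex.continuous_re
  · exact isOpen_ne

lemma diffOn_term (n : ℕ) :
    DifferentiableOn ℂ (zterm (n + 1)) {s : ℂ | 1/4 < s.re ∧ s ≠ 1} := by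
  intro s hs
  have h1 : ((n:ℂ) + 1) ≠ 0 := by
    intro hh
    have : ((n:ℝ) + 1) = 0 := by exact_mod_cast congrArg Complex.re hh
    nlinarith [Nat.cast_nonneg (α := ℝ) n]
  have h2 : ((n:ℂ) + 1 + 1) ≠ 0 := by
    intro hh
    have : ((n:ℝ) + 1 + 1) = 0 := by exact_mod_cast congrArg Complex.re hh
    nlinarith [Nat.cast_nonneg (α := ℝ) n]
  have hds : (1:ℂ) - s ≠ 0 := fun hh => hs.2 (by linear_combination -hh)
  apply DifferentiableAt.differentiableWithinAt
  have d1 : DifferentiableAt ℂ (fun s : ℂ => ((n:ℂ) + 1) ^ (-s)) s :=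
    (differentiable_neg.differentiableAt).const_cpow (Or.inl h1)
  have d2 : DifferentiableAt ℂ (fun s : ℂ => ((n:ℂ) + 1 + 1) ^ (1 - s)) s :=
    ((differentiable_const (1:ℂ)).sub differentiable_id).differentiableAt.const_cpow (Or.inl h2)
  have d3 : DifferentiableAt ℂ (fun s : ℂ => ((n:ℂ) + 1) ^ (1 - s)) s :=
    ((differentiable_const (1:ℂ)).sub differentiable_id).differentiableAt.const_cpow (Or.inl h1)
  have d4 : DifferentiableAt ℂ (fun s : ℂ => (1:ℂ) - s) s :=
    ((differentiable_const (1:ℂ)).sub differentiable_id).differentiableAt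
  have : DifferentiableAt ℂ (fun s : ℂ =>
      ((n:ℂ) + 1) ^ (-s) - (((n:ℂ) + 1 + 1) ^ (1 - s) - ((n:ℂ) + 1) ^ (1 - s)) / (1 - s)) s :=
    d1.sub ((d2.sub d3).div d4 hds)
  refine this.congr_of_eventuallyEq (Filter.Eventually.of_forall fun x => ?_)
  simp only [zterm]
  push_cast
  ring_nf

lemma diffOn_phiz : DifferentiableOn ℂ phiz {s : ℂ | 1/4 < s.re ∧ s ≠ 1} := by
  set V := {s : ℂ | 1/4 < s.re ∧ s ≠ 1} with hV
  have hVopen : IsOpen V := isOpen_V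
  have hloc : TendstoLocallyUniformlyOn
      (fun (I : Finset ℕ) (s : ℂ) => ∑ n ∈ I, zterm (n + 1) s) phiz atTop V := by
    rw [tendstoLocallyUniformlyOn_iff_forall_isCompact hVopen]
    intro K hKV hK
    rcases K.eq_empty_or_nonempty with rfl | hne
    · simp [tendstoUniformlyOn_iff_tendsto]
    obtain ⟨R, hR⟩ := hK.isBounded.exists_norm_le
    obtain ⟨z, hzK, hz⟩ := hK.exists_isMinOn hne Complex.continuous_re.continuousOn
    have haz : 1/4 < z.re := (hKV hzK).1
    have hR0 : 0 ≤ R := le_trans (norm_nonneg z) (hR z hzK)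
    have hu : Summable (fun n : ℕ => R * ((n:ℝ) + 1) ^ (-z.re - 1)) :=
      (summable_aux (by linarith)).mul_left _
    have hbound : ∀ (n : ℕ) (s : ℂ), s ∈ K →
        ‖zterm (n + 1) s‖ ≤ R * ((n:ℝ) + 1) ^ (-z.re - 1) := by
      intro n s hsK
      have hsV := hKV hsK
      have hb := zterm_bound (n := n + 1) (by omega) hsV.2 (by linarith [hsV.1] : 0 < s.re)
      have hcast : ((n + 1 : ℕ) : ℝ) = (n:ℝ) + 1 := by push_cast; ring
      rw [hcast] at hb
      refine le_trans hb ?_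
      have h1 : ((n:ℝ) + 1) ^ (-s.re - 1) ≤ ((n:ℝ) + 1) ^ (-z.re - 1) := by
        apply Real.rpow_le_rpow_of_exponent_le (by linarith [Nat.cast_nonneg (α := ℝ) n])
        linarith [isMinOn_iff.mp hz s hsK]
      calc ‖s‖ * ((n:ℝ) + 1) ^ (-s.re - 1)
          ≤ R * ((n:ℝ) + 1) ^ (-s.re - 1) := by
            apply mul_le_mul_of_nonneg_right (hR s hsK) (Real.rpow_nonneg (by positivity) _)
        _ ≤ R * ((n:ℝ) + 1) ^ (-z.re - 1) := mul_le_mul_of_nonneg_left h1 hR0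
    exact tendstoUniformlyOn_tsum hu hbound
  exact hloc.differentiableOn (Filter.Eventually.of_forall fun I =>
    DifferentiableOn.fun_sum fun n _ => diffOn_term n) hVopen

lemma phiz_at {t : ℝ} (h : riemannZeta (1 / 2 + t * Complex.I) = 0) :
    phiz (1 / 2 + t * Complex.I) = 1 / (1 - (1 / 2 + t * Complex.I)) := by
  set U : Set ℂ := {s : ℂ | 1/4 < s.re ∧ ¬(s.im = 0 ∧ 1 ≤ s.re)} with hUdef
  set V : Set ℂ := {s : ℂ | 1/4 < s.re ∧ s ≠ 1} with hVdef
  have hUV : U ⊆ V := by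
    rintro s ⟨h1, h2⟩
    refine ⟨h1, fun hh => h2 ?_⟩
    rw [hh]
    exact ⟨Complex.one_im, by rw [Complex.one_re]⟩
  have hUopen : IsOpen U := by
    have : U = {s : ℂ | 1/4 < s.re} ∩ ({s : ℂ | s.im = 0} ∩ {s : ℂ | 1 ≤ s.re})ᶜ := by
      ext s; simp [hUdef, Set.mem_inter_iff, and_comm]
    rw [this]
    refine (isOpen_lt continuous_const Complex.continuous_re).inter ?_
    exact (((isClosed_eq Complex.continuous_im continuous_const)).inter
      (isClosed_le continuous_const Complex.continuous_re)).isOpen_compl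
  have hUconn : IsPreconnected U := by
    have hstar : ∀ y ∈ U, segment ℝ ((1:ℂ)/2) y ⊆ U := by
      intro y hy x hx
      rw [segment_eq_image ℝ] at hx
      obtain ⟨θ, ⟨hθ0, hθ1⟩, rfl⟩ := hx
      obtain ⟨hy1, hy2⟩ := hy
      have hre : ((1 - θ) • ((1:ℂ)/2) + θ • y).re = (1 - θ) * (1/2) + θ * y.re := by
        simp [Complex.add_re, Complex.smul_re]
      have him : ((1 - θ) • ((1:ℂ)/2) + θ • y).im = θ * y.im := by
        simp [Complex.add_im, Complex.smul_im]
      constructor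
      · rw [hre]
        rcases eq_or_lt_of_le hθ0 with hθz | hθpos
        · rw [← hθz]; norm_num
        · nlinarith [mul_lt_mul_of_pos_left hy1 hθpos]
      · rintro ⟨h1, h2⟩
        rw [him] at h1
        rw [hre] at h2
        rcases eq_or_lt_of_le hθ0 with hθz | hθpos
        · rw [← hθz] at h2; norm_num at h2
        · have hyim : y.im = 0 := by
            rcases mul_eq_zero.mp h1 with hh | hh
            · exact absurd hh hθpos.ne'
            · exact hh
          have hyre : y.re < 1 := by
            by_contra hcon
            exact hy2 ⟨hyim, by linarith⟩
          nlinarith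
    have hc : ((1:ℂ)/2) ∈ U := by
      refine ⟨by norm_num, ?_⟩
      rintro ⟨-, hge⟩
      norm_num at hge
    have : IsPathConnected U := by
      refine ⟨(1:ℂ)/2, hc, fun {y} hy => ?_⟩
      exact JoinedIn.of_segment_subset (hstar y hy)
    exact this.isConnected.isPreconnected
  -- the two analytic functions
  set g : ℂ → ℂ := fun s => phiz s + 1 / (s - 1) with hgdef
  have hgd : DifferentiableOn ℂ g V := by
    apply DifferentiableOn.add diffOn_phiz
    intro s hs
    apply DifferentiableAt.differentiableWithinAt
    apply (differentiable_const (1:ℂ)).differentiableAt.div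
      ((differentiable_id.sub (differentiable_const 1)).differentiableAt)
    exact sub_ne_zero.mpr hs.2
  have hzd : DifferentiableOn ℂ riemannZeta V := fun s hs =>
    (differentiableAt_riemannZeta hs.2).differentiableWithinAt
  have hga : AnalyticOnNhd ℂ g U :=
    (hgd.mono hUV).analyticOnNhd hUopen
  have hza : AnalyticOnNhd ℂ riemannZeta U :=
    (hzd.mono hUV).analyticOnNhd hUopen
  have hz₀ : (2 + Complex.I) ∈ U := by
    refine ⟨by norm_num [Complex.add_re], ?_⟩
    rintro ⟨him, -⟩
    norm_num [Complex.add_im] at him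
  have hev : g =ᶠ[𝓝 (2 + Complex.I)] riemannZeta := by
    have hopen : IsOpen {s : ℂ | 1 < s.re} := isOpen_lt continuous_const Complex.continuous_re
    have hmem : (2 + Complex.I) ∈ {s : ℂ | 1 < s.re} := by simp [Complex.add_re]
    filter_upwards [hopen.mem_nhds hmem] with s hs
    exact phiz_eq hs
  have heq : Set.EqOn g riemannZeta U :=
    hga.eqOn_of_preconnected_of_eventuallyEq hza hUconn hz₀ hev
  have hre₀ : ((1:ℂ) / 2 + t * Complex.I).re = 1/2 := by simp
  have hs₀ : (1 / 2 + t * Complex.I) ∈ U := by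
    refine ⟨by rw [hre₀]; norm_num, ?_⟩
    rintro ⟨-, hge⟩
    rw [hre₀] at hge
    norm_num at hge
  have hkey := heq hs₀
  rw [h] at hkey
  simp only [hgdef] at hkey
  have h2 : phiz (1 / 2 + t * Complex.I) = -(1 / ((1 / 2 + t * Complex.I) - 1)) := by
    linear_combination hkey
  rw [h2, ← div_neg, neg_sub]

lemma re_term (t : ℝ) {m n : ℕ} (hm : 1 ≤ m) (hn : 1 ≤ n) :
    ((m:ℂ) ^ (-((1:ℂ)/2 + t*Complex.I))
      * (starRingEnd ℂ) ((n:ℂ) ^ (-((1:ℂ)/2 + t*Complex.I)))).re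
    = ((m:ℝ) * (n:ℝ)) ^ (-(1/2:ℝ)) * Real.cos (t * (Real.log m - Real.log n)) := by
  have hm0 : (0:ℝ) < m := by exact_mod_cast hm
  have hn0 : (0:ℝ) < n := by exact_mod_cast hn
  have hmc : ((m:ℂ)) ≠ 0 := by exact_mod_cast hm0.ne'
  have hnc : ((n:ℂ)) ≠ 0 := by exact_mod_cast hn0.ne'
  set L : ℝ := Real.log m
  set M : ℝ := Real.log n
  have h1 : (m:ℂ) ^ (-((1:ℂ)/2 + t*Complex.I)) = Complex.exp ((L:ℂ) * (-((1:ℂ)/2 + t*Complex.I))) := by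
    rw [cpow_def_of_ne_zero hmc, Complex.natCast_log]
  have h2 : (n:ℂ) ^ (-((1:ℂ)/2 + t*Complex.I)) = Complex.exp ((M:ℂ) * (-((1:ℂ)/2 + t*Complex.I))) := by
    rw [cpow_def_of_ne_zero hnc, Complex.natCast_log]
  rw [h1, h2, ← Complex.exp_conj, ← Complex.exp_add, Complex.exp_re]
  have hre : ((L:ℂ) * (-((1:ℂ)/2 + t*Complex.I))
      + (starRingEnd ℂ) ((M:ℂ) * (-((1:ℂ)/2 + t*Complex.I)))).re = -(L + M)/2 := by
    simp [Complex.add_re, Complex.mul_re, Complex.mul_im]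
    ring
  have him : ((L:ℂ) * (-((1:ℂ)/2 + t*Complex.I))
      + (starRingEnd ℂ) ((M:ℂ) * (-((1:ℂ)/2 + t*Complex.I)))).im = -(t * (L - M)) := by
    simp [Complex.add_im, Complex.mul_re, Complex.mul_im]
    ring
  rw [hre, him, Real.cos_neg]
  congr 1
  rw [← Real.log_mul hm0.ne' hn0.ne', Real.rpow_def_of_pos (by positivity)]
  congr 1
  ring

lemma double_sum_eq (t : ℝ) (k : ℕ) :
    ∑ m ∈ Finset.Icc 1 k, ∑ n ∈ Finset.Icc 1 k,
        ((m * n : ℝ)) ^ (-(1 / 2 : ℝ)) * Real.cos (t * (Real.log m - Real.log n))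
      = Complex.normSq (∑ n ∈ Finset.Icc 1 k, (n:ℂ) ^ (-((1:ℂ)/2 + t*Complex.I))) := by
  set a : ℕ → ℂ := fun n => (n:ℂ) ^ (-((1:ℂ)/2 + t*Complex.I)) with ha
  set S : ℂ := ∑ n ∈ Finset.Icc 1 k, a n with hS
  have h1 : Complex.normSq S = (S * (starRingEnd ℂ) S).re := by
    rw [Complex.mul_conj]; simp
  rw [h1, hS, map_sum, Finset.sum_mul_sum, Complex.re_sum]
  apply Finset.sum_congr rfl
  intro m hm
  rw [Complex.re_sum]
  apply Finset.sum_congr rfl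
  intro n hn
  have hm1 : 1 ≤ m := (Finset.mem_Icc.mp hm).1
  have hn1 : 1 ≤ n := (Finset.mem_Icc.mp hn).1
  exact (re_term t hm1 hn1).symm

theorem stmt_14 (t : ℝ) (h : riemannZeta (1 / 2 + t * Complex.I) = 0) :
    Tendsto (fun k : ℕ =>
        (1 / (k : ℝ)) * ∑ m ∈ Finset.Icc 1 k, ∑ n ∈ Finset.Icc 1 k,
            ((m * n : ℝ)) ^ (-(1 / 2 : ℝ)) * Real.cos (t * (Real.log m - Real.log n)))
      atTop (𝓝 (1 / (1 / 4 + t ^ 2))) := by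
  set s₀ : ℂ := 1 / 2 + t * Complex.I with hs₀def
  have hre₀ : s₀.re = 1/2 := by simp [hs₀def]
  have hs₀1 : s₀ ≠ 1 := by
    intro hh
    have := congrArg Complex.re hh
    rw [hre₀, Complex.one_re] at this
    norm_num at this
  have h4 : 0 < s₀.re := by rw [hre₀]; norm_num
  set u : ℂ := 1 - s₀ with hudef
  have hu0 : u ≠ 0 := fun hh => hs₀1 (by rw [hs₀def]; linear_combination -hh)
  have hure : u.re = 1/2 := by rw [hudef, Complex.sub_re, Complex.one_re, hre₀]; norm_num
  have huabs : 0 < ‖u‖ := by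
    rw [norm_pos_iff]; exact hu0
  have hpz : phiz s₀ = 1 / u := phiz_at h
  set S : ℕ → ℂ := fun k => ∑ n ∈ Finset.Icc 1 k, (n:ℂ) ^ (-s₀) with hSdef
  -- S k - (k+1)^u / u → 0
  have hdiff : Tendsto (fun k : ℕ => S k - ((k:ℂ) + 1) ^ u / u) atTop (𝓝 0) := by
    have h1 : ∀ k : ℕ, S k - ((k:ℂ) + 1) ^ u / u
        = (∑ n ∈ Finset.range k, zterm (n + 1) s₀) - 1 / u := by
      intro k
      rw [hSdef]
      simp only
      rw [partial_sum_eq k hs₀1, ← hudef]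
      field_simp
      ring
    have h2 : Tendsto (fun k : ℕ => (∑ n ∈ Finset.range k, zterm (n + 1) s₀) - 1 / u) atTop
        (𝓝 (phiz s₀ - 1 / u)) := (tendsto_partial_zterm h4 hs₀1).sub_const _
    rw [hpz, sub_self] at h2
    exact h2.congr fun k => (h1 k).symm
  have habs0 : Tendsto (fun k : ℕ => ‖S k - ((k:ℂ) + 1) ^ u / u‖) atTop (𝓝 0) := by
    have := hdiff.norm
    simpa using this
  -- abs of the main term
  have habsT : ∀ k : ℕ, ‖((k:ℂ) + 1) ^ u / u‖
      = Real.sqrt ((k:ℝ) + 1) / ‖u‖ := by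
    intro k
    rw [norm_div]
    congr 1
    have : ((k:ℂ) + 1) = (((k:ℝ) + 1 : ℝ) : ℂ) := by push_cast; ring
    rw [this, Complex.norm_cpow_eq_rpow_re_of_pos (by positivity), hure, Real.sqrt_eq_rpow]
  set b : ℕ → ℝ := fun k => ‖S k‖ / Real.sqrt k with hbdef
  set c : ℕ → ℝ := fun k => Real.sqrt ((k:ℝ) + 1) / (‖u‖ * Real.sqrt k) with hcdef
  have hc : Tendsto c atTop (𝓝 (1 / ‖u‖)) := by
    have h1 : Tendsto (fun k : ℕ => 1 + 1 / (k:ℝ)) atTop (𝓝 1) := by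
      have : Tendsto (fun n : ℕ => 1 / (n:ℝ)) atTop (𝓝 0) := tendsto_one_div_atTop_nhds_zero_nat
      simpa using (tendsto_const_nhds (x := (1:ℝ))).add this
    have h2 : Tendsto (fun k : ℕ => Real.sqrt (1 + 1 / (k:ℝ))) atTop (𝓝 1) := by
      have := (Real.continuous_sqrt.tendsto 1).comp h1
      simpa [Function.comp_def] using this
    have h3 : Tendsto (fun k : ℕ => Real.sqrt (1 + 1 / (k:ℝ)) / ‖u‖) atTop
        (𝓝 (1 / ‖u‖)) := h2.div_const _
    apply h3.congr'
    filter_upwards [eventually_ge_atTop 1] with k hk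
    have hk0 : (0:ℝ) < k := by exact_mod_cast hk
    rw [hcdef]
    simp only
    rw [show (1:ℝ) + 1/(k:ℝ) = ((k:ℝ) + 1) / k by field_simp,
      Real.sqrt_div (by positivity) _, div_div, mul_comm]
  have hbc : Tendsto (fun k : ℕ => b k - c k) atTop (𝓝 0) := by
    apply squeeze_zero_norm' ?_ habs0
    filter_upwards [eventually_ge_atTop 1] with k hk
    have hk0 : (0:ℝ) < k := by exact_mod_cast hk
    have hk1 : (1:ℝ) ≤ Real.sqrt k := by
      rw [show (1:ℝ) = Real.sqrt 1 by simp]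
      exact Real.sqrt_le_sqrt (by exact_mod_cast hk)
    have h1 : b k - c k
        = (‖S k‖ - ‖((k:ℂ)+1) ^ u / u‖) / Real.sqrt k := by
      rw [hbdef, hcdef]
      simp only
      rw [habsT k, sub_div]
      congr 1
      rw [div_div]
    rw [h1, Real.norm_eq_abs, abs_div, _root_.abs_of_nonneg (Real.sqrt_nonneg _)]
    calc |‖S k‖ - ‖((k:ℂ)+1) ^ u / u‖| / Real.sqrt k
        ≤ |‖S k‖ - ‖((k:ℂ)+1) ^ u / u‖| :=
          div_le_self (abs_nonneg _) hk1
      _ ≤ ‖S k - ((k:ℂ)+1) ^ u / u‖ :=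
          abs_norm_sub_norm_le _ _
  have hb : Tendsto b atTop (𝓝 (1 / ‖u‖)) := by
    have := hbc.add hc
    rw [zero_add] at this
    exact this.congr fun k => by ring
  have hb2 : Tendsto (fun k : ℕ => b k ^ 2) atTop (𝓝 ((1 / ‖u‖) ^ 2)) := by
    have hh := hb.mul hb
    rw [show (1 / ‖u‖) * (1 / ‖u‖) = (1 / ‖u‖) ^ 2 from (sq _).symm]
      at hh
    exact hh.congr fun k => (sq (b k)).symm
  have huim : u.im = -t := by
    rw [hudef, Complex.sub_im, Complex.one_im, hs₀def]
    simp
  have hval : (1 / ‖u‖) ^ 2 = 1 / (1/4 + t^2) := by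
    rw [div_pow, one_pow, Complex.sq_norm, Complex.normSq_apply, hure, huim]
    norm_num
    ring
  rw [← hval]
  apply hb2.congr'
  filter_upwards [eventually_ge_atTop 1] with k hk
  have hk0 : (0:ℝ) < k := by exact_mod_cast hk
  have hds := double_sum_eq t k
  rw [show ((1:ℂ)/2 + t*Complex.I) = s₀ from rfl] at hds
  rw [hds]
  simp only [hbdef, hSdef]
  rw [div_pow, Real.sq_sqrt hk0.le, Complex.sq_norm]
  ring
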